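/- For a nonnegative integer m, let U_m ∈ ℝ[x,y] be the polynomial such that (x + i·y)^m = U_m(x,y) + i·V_m(x,y) for real x, y (so U_m is the real part of (x+iy)^m as a polynomial). Let R₁ denote the subring ℤ[x² + y², (x² − y²)²] of ℝ[x,y] generated over ℤ by x² + y² and (x² − y²)². Then: (1) if m ≡ 0 (mod 4), then U_m ∈ R₁; and (2) if m ≡ 2 (mod 4), then U_m ∈ (x² − y²)·R₁, i.e. U_m = (x² − y²)·h for some h ∈ R₁. -/
import Mathlib

open MvPolynomial

private noncomputable def Paux : ℕ → MvPolynomial (Fin 2) ℝ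
  | 0 => 1
  | 1 => X 0 ^ 2 - X 1 ^ 2
  | (k+2) => 2 * (X 0 ^ 2 - X 1 ^ 2) * Paux (k+1) - (X 0 ^ 2 + X 1 ^ 2) ^ 2 * Paux k

private lemma complex_rec (z : ℂ) (k : ℕ) :
    (z ^ (k+2)).re = 2 * z.re * (z ^ (k+1)).re - Complex.normSq z * (z ^ k).re := by
  have h : z ^ (k+2) = ((2 * z.re : ℝ) : ℂ) * z ^ (k+1) - ((Complex.normSq z : ℝ) : ℂ) * z ^ k := by
    have h1 : ((2 * z.re : ℝ) : ℂ) = z + starRingEnd ℂ z := by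
      rw [Complex.add_conj]
    have h2 : ((Complex.normSq z : ℝ) : ℂ) = z * starRingEnd ℂ z := (Complex.mul_conj z).symm
    rw [h1, h2]; ring
  rw [h]
  simp [Complex.sub_re, Complex.mul_re, Complex.ofReal_re, Complex.ofReal_im]

private lemma evalPaux (x y : ℝ) (k : ℕ) :
    MvPolynomial.eval ![x, y] (Paux k) = (((x : ℂ) + (y : ℂ) * Complex.I) ^ (2 * k)).re := by
  set z : ℂ := (x : ℂ) + (y : ℂ) * Complex.I with hz
  have hre : z.re = x := by simp [hz]
  have him : z.im = y := by simp [hz]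
  have hw_re : (z ^ 2).re = x ^ 2 - y ^ 2 := by
    simp [sq, Complex.mul_re, hre, him]
    try ring
  have hw_norm : Complex.normSq (z ^ 2) = (x ^ 2 + y ^ 2) ^ 2 := by
    rw [map_pow]
    congr 1
    simp [Complex.normSq_apply, hre, him, sq]
  have key : ∀ k : ℕ,
      MvPolynomial.eval ![x, y] (Paux k) = (z ^ (2 * k)).re ∧
      MvPolynomial.eval ![x, y] (Paux (k+1)) = (z ^ (2 * (k+1))).re := by
    intro k
    induction k with
    | zero =>
      constructor
      · simp [Paux]
      · have : (2 : ℕ) * (0 + 1) = 2 := by norm_num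
        rw [this]
        simp [Paux, hw_re]
    | succ n ih =>
      refine ⟨ih.2, ?_⟩
      have hpow : ∀ j : ℕ, z ^ (2 * j) = (z ^ 2) ^ j := by
        intro j; rw [← pow_mul]
      rw [hpow]
      have hrec := complex_rec (z ^ 2) n
      have e1 : MvPolynomial.eval ![x, y] (Paux (n + 1 + 1)) =
          2 * (x ^ 2 - y ^ 2) * MvPolynomial.eval ![x, y] (Paux (n+1))
          - (x ^ 2 + y ^ 2) ^ 2 * MvPolynomial.eval ![x, y] (Paux n) := by
        simp [Paux]
        try ring
      rw [e1, ih.1, ih.2, hpow, hpow, hrec, hw_re, hw_norm]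
  exact (key k).1

private lemma memPaux (j : ℕ) :
    Paux (2 * j) ∈ Algebra.adjoin ℤ
      ({X 0 ^ 2 + X 1 ^ 2, (X 0 ^ 2 - X 1 ^ 2) ^ 2} : Set (MvPolynomial (Fin 2) ℝ)) ∧
    ∃ h ∈ Algebra.adjoin ℤ
      ({X 0 ^ 2 + X 1 ^ 2, (X 0 ^ 2 - X 1 ^ 2) ^ 2} : Set (MvPolynomial (Fin 2) ℝ)),
      Paux (2 * j + 1) = (X 0 ^ 2 - X 1 ^ 2) * h := by
  set A := Algebra.adjoin ℤ
      ({X 0 ^ 2 + X 1 ^ 2, (X 0 ^ 2 - X 1 ^ 2) ^ 2} : Set (MvPolynomial (Fin 2) ℝ)) with hA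
  have hs : (X 0 ^ 2 + X 1 ^ 2 : MvPolynomial (Fin 2) ℝ) ∈ A :=
    Algebra.subset_adjoin (by simp)
  have hq : ((X 0 ^ 2 - X 1 ^ 2 : MvPolynomial (Fin 2) ℝ)) ^ 2 ∈ A :=
    Algebra.subset_adjoin (by simp)
  induction j with
  | zero =>
    constructor
    · simpa [Paux] using (one_mem A)
    · exact ⟨1, one_mem A, by simp [Paux]⟩
  | succ n ih =>
    obtain ⟨ih0, h, hhA, hh⟩ := ih
    have e2 : (2 : ℕ) * (n + 1) = (2 * n) + 2 := by ring
    have e3 : (2 : ℕ) * (n + 1) + 1 = (2 * n + 1) + 2 := by ring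
    have mem2 : Paux (2 * n + 2) ∈ A := by
      have : Paux (2 * n + 2) =
          2 * (X 0 ^ 2 - X 1 ^ 2) ^ 2 * h - (X 0 ^ 2 + X 1 ^ 2) ^ 2 * Paux (2 * n) := by
        show (2 * (X 0 ^ 2 - X 1 ^ 2) * Paux (2 * n + 1)
          - (X 0 ^ 2 + X 1 ^ 2) ^ 2 * Paux (2 * n) : MvPolynomial (Fin 2) ℝ) = _
        rw [hh]; ring
      rw [this]
      exact sub_mem (by
        have : (2 : MvPolynomial (Fin 2) ℝ) ∈ A := by
          simpa using (A.natCast_mem 2)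
        exact mul_mem (mul_mem this hq) hhA)
        (mul_mem (pow_mem hs 2) ih0)
    constructor
    · rw [e2]; exact mem2
    · refine ⟨2 * Paux (2 * n + 2) - (X 0 ^ 2 + X 1 ^ 2) ^ 2 * h, ?_, ?_⟩
      · refine sub_mem ?_ (mul_mem (pow_mem hs 2) hhA)
        have h2 : (2 : MvPolynomial (Fin 2) ℝ) ∈ A := by
          simpa using (A.natCast_mem 2)
        exact mul_mem h2 mem2
      · rw [e3]
        show (2 * (X 0 ^ 2 - X 1 ^ 2) * Paux (2 * n + 2)
          - (X 0 ^ 2 + X 1 ^ 2) ^ 2 * Paux (2 * n + 1) : MvPolynomial (Fin 2) ℝ) = _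
        rw [hh]; ring

/-- Let `U_m ∈ ℝ[x,y]` be the polynomial real part of `(x + iy)^m`, and let
`R₁ = ℤ[x² + y², (x² − y²)²] ⊆ ℝ[x,y]`. If `m ≡ 0 (mod 4)` then `U_m ∈ R₁`, and if
`m ≡ 2 (mod 4)` then `U_m ∈ (x² − y²)·R₁`. -/
theorem real_part_power_in_subring (m : ℕ) (U : MvPolynomial (Fin 2) ℝ)
    (hU : ∀ x y : ℝ, (((x : ℂ) + (y : ℂ) * Complex.I) ^ m).re
      = MvPolynomial.eval ![x, y] U) :
    (m % 4 = 0 →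
      U ∈ Algebra.adjoin ℤ
        ({X 0 ^ 2 + X 1 ^ 2, (X 0 ^ 2 - X 1 ^ 2) ^ 2} : Set (MvPolynomial (Fin 2) ℝ))) ∧
    (m % 4 = 2 →
      ∃ h ∈ Algebra.adjoin ℤ
        ({X 0 ^ 2 + X 1 ^ 2, (X 0 ^ 2 - X 1 ^ 2) ^ 2} : Set (MvPolynomial (Fin 2) ℝ)),
        U = (X 0 ^ 2 - X 1 ^ 2) * h) := by
  have hUP : ∀ k : ℕ, m = 2 * k → U = Paux k := by
    intro k hk
    apply MvPolynomial.funext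
    intro f
    have hf : f = ![f 0, f 1] := by
      funext i; fin_cases i <;> rfl
    rw [hf, ← hU (f 0) (f 1), hk, evalPaux]
  constructor
  · intro h4
    obtain ⟨j, hj⟩ : ∃ j, m = 4 * j := ⟨m / 4, by omega⟩
    have := hUP (2 * j) (by omega)
    rw [this]
    exact (memPaux j).1
  · intro h4
    obtain ⟨j, hj⟩ : ∃ j, m = 4 * j + 2 := ⟨m / 4, by omega⟩
    have := hUP (2 * j + 1) (by omega)
    rw [this]
    exact (memPaux j).2
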